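/- Scalar rational approximation bound: for all x ≥ 0, n ≥ 1, and 0 ≤ β ≤ 1, |(1+x)^{-n} - e^{-nx}| ≤ C x^{β/2} for a constant C independent of n and x. -/

import Mathlib

/-!
Since `1 + x ≤ eˣ` gives `e^{-x} ≤ (1+x)⁻¹ ≤ e^{-x/(1+x)}`, the difference
`(1+x)^{-n} - e^{-nx}` is nonnegative and at most `e^{-a} - e^{-a(1+x)}` with
`a = nx/(1+x)`. The latter is `e^{-a}(1 - e^{-ax}) ≤ a e^{-a} x ≤ x`, so the difference is
bounded by `min x 1`, uniformly in `n`, and `min x 1 ≤ x^s` for every `s ∈ [0, 1]`.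
The constant `C = 1` works.
-/

open Real

lemma exp_neg_le_inv_one_add {x : ℝ} (hx : -1 < x) : exp (-x) ≤ (1 + x)⁻¹ := by
  rw [exp_neg]
  exact inv_anti₀ (by linarith) (by linarith [add_one_le_exp x])

lemma inv_one_add_le_exp_neg_div {x : ℝ} (hx : -1 < x) :
    (1 + x)⁻¹ ≤ exp (-(x / (1 + x))) := by
  have h : (1 + x)⁻¹ = 1 - x / (1 + x) := by
    field_simp [show 1 + x ≠ 0 by linarith]
    ring
  rw [h]
  exact one_sub_le_exp_neg _

lemma exp_neg_sub_exp_neg_mul_one_add_le {a x : ℝ} (hx : 0 ≤ x) :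
    exp (-a) - exp (-(a * (1 + x))) ≤ x := by
  have hmul : a * exp (-a) ≤ 1 :=
    (mul_exp_neg_le_exp_neg_one a).trans (exp_le_one_iff.mpr (by norm_num))
  calc exp (-a) - exp (-(a * (1 + x)))
      = exp (-a) * (1 - exp (-(a * x))) := by
        rw [mul_sub, ← exp_add]; ring_nf
    _ ≤ exp (-a) * (a * x) := by gcongr; linarith [add_one_le_exp (-(a * x))]
    _ = (a * exp (-a)) * x := by ring
    _ ≤ 1 * x := by gcongr
    _ = x := one_mul x

lemma inv_one_add_pow_sub_exp_nonneg {x : ℝ} (hx : -1 < x) (n : ℕ) :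
    0 ≤ ((1 + x)⁻¹) ^ n - exp (-(n : ℝ) * x) := by
  have h : exp (-(n : ℝ) * x) = exp (-x) ^ n := by
    rw [← exp_nat_mul]; ring_nf
  rw [h, sub_nonneg]
  exact pow_le_pow_left₀ (exp_pos _).le (exp_neg_le_inv_one_add hx) n

lemma inv_one_add_pow_sub_exp_le_self {x : ℝ} (hx : 0 ≤ x) (n : ℕ) :
    ((1 + x)⁻¹) ^ n - exp (-(n : ℝ) * x) ≤ x := by
  have hpow : ((1 + x)⁻¹) ^ n ≤ exp (-(n * x / (1 + x))) := by
    calc ((1 + x)⁻¹) ^ n ≤ exp (-(x / (1 + x))) ^ n :=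
          pow_le_pow_left₀ (by positivity) (inv_one_add_le_exp_neg_div (by linarith)) n
      _ = exp (-(n * x / (1 + x))) := by rw [← exp_nat_mul, mul_neg, mul_div_assoc]
  have hna : (n : ℝ) * x = n * x / (1 + x) * (1 + x) := (div_mul_cancel₀ _ (by positivity)).symm
  rw [neg_mul, hna]
  linarith [exp_neg_sub_exp_neg_mul_one_add_le (a := n * x / (1 + x)) hx]

lemma inv_one_add_pow_sub_exp_le_one {x : ℝ} (hx : 0 ≤ x) (n : ℕ) :
    ((1 + x)⁻¹) ^ n - exp (-(n : ℝ) * x) ≤ 1 := by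
  have : ((1 + x)⁻¹) ^ n ≤ 1 := pow_le_one₀ (by positivity) (inv_le_one_of_one_le₀ (by linarith))
  linarith [exp_pos (-(n : ℝ) * x)]

lemma abs_inv_one_add_pow_sub_exp_le_min {x : ℝ} (hx : 0 ≤ x) (n : ℕ) :
    |((1 + x)⁻¹) ^ n - exp (-(n : ℝ) * x)| ≤ min x 1 := by
  rw [abs_of_nonneg (inv_one_add_pow_sub_exp_nonneg (by linarith) n)]
  exact le_min (inv_one_add_pow_sub_exp_le_self hx n) (inv_one_add_pow_sub_exp_le_one hx n)

lemma min_one_le_rpow {x s : ℝ} (hx : 0 ≤ x) (hs0 : 0 ≤ s) (hs1 : s ≤ 1) :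
    min x 1 ≤ x ^ s := by
  rcases le_total x 1 with hx1 | hx1
  · exact (min_le_left x 1).trans (self_le_rpow_of_le_one hx hx1 hs1)
  · exact (min_le_right x 1).trans (one_le_rpow hx1 hs0)

/-- Scalar rational approximation bound: for `0 ≤ β ≤ 1` there is a constant `C > 0`,
independent of `n` and `x`, such that for all `x ≥ 0` and `n ≥ 1`,
`|(1+x)^{-n} - e^{-nx}| ≤ C x^{β/2}`. -/
theorem stmt17 (β : ℝ) (hβ0 : 0 ≤ β) (hβ1 : β ≤ 1) :
    ∃ C > 0, ∀ x : ℝ, 0 ≤ x → ∀ n : ℕ, 1 ≤ n →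
      |((1 + x)⁻¹) ^ n - Real.exp (-(n : ℝ) * x)| ≤ C * x ^ (β / 2) := by
  refine ⟨1, one_pos, fun x hx n _ => ?_⟩
  rw [one_mul]
  exact (abs_inv_one_add_pow_sub_exp_le_min hx n).trans
    (min_one_le_rpow hx (by linarith) (by linarith))
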